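/- Let R be a commutative ring and M an R-module. The map sending an R-submodule L of M to the subtractive closure ⟨u_M(L)⟩_k in fgMod(M) of the fgId(R)-subsemimodule generated by {R·m : m ∈ L}, and the map sending a subtractive fgId(R)-subsemimodule Λ of fgMod(M) to u_M⁻¹(Λ) = {m ∈ M : R·m ∈ Λ}, are mutually inverse, inclusion-preserving bijections between the set Mod(M) of R-submodules of M and the set Mod_k(fgMod(M)) of subtractive fgId(R)-subsemimodules of fgMod(M). -/

import Mathlib

def FGIdeal (R : Type*) [CommRing R] : Type _ := {I : Ideal R // I.FG}

namespace FGIdeal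

variable {R : Type*} [CommRing R]

instance : Zero (FGIdeal R) := ⟨⟨⊥, Submodule.fg_bot⟩⟩

instance : One (FGIdeal R) := ⟨⟨1, ⟨{1}, by simp [Ideal.one_eq_top]⟩⟩⟩

instance : Add (FGIdeal R) :=
  ⟨fun I J => ⟨I.1 + J.1, by rw [Submodule.add_eq_sup]; exact Submodule.FG.sup I.2 J.2⟩⟩

instance : Mul (FGIdeal R) := ⟨fun I J => ⟨I.1 * J.1, Submodule.FG.mul I.2 J.2⟩⟩

instance : SMul ℕ (FGIdeal R) :=
  ⟨fun n I => ⟨n • I.1, by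
    induction n with
    | zero => simpa using! Submodule.fg_bot
    | succ n ih => rw [succ_nsmul, Submodule.add_eq_sup]; exact Submodule.FG.sup ih I.2⟩⟩

instance : Pow (FGIdeal R) ℕ := ⟨fun I n => ⟨I.1 ^ n, Submodule.FG.pow I.2 n⟩⟩

instance : NatCast (FGIdeal R) :=
  ⟨fun n => ⟨(n : Ideal R), by
    induction n with
    | zero => simpa using! Submodule.fg_bot
    | succ n ih =>
        rw [Nat.cast_succ, Submodule.add_eq_sup]
        exact Submodule.FG.sup ih ⟨{1}, by simp [Ideal.one_eq_top]⟩⟩⟩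

instance : CommSemiring (FGIdeal R) :=
  Subtype.val_injective.commSemiring (fun I : FGIdeal R => I.1) rfl rfl
    (fun _ _ => rfl) (fun _ _ => rfl) (fun _ _ => rfl) (fun _ _ => rfl) (fun _ => rfl)

end FGIdeal

/-- The universal integral seminorm `u_R : R → fgId(R)`, `a ↦ R·a`. -/
def uRfg {R : Type*} [CommRing R] (a : R) : FGIdeal R := ⟨Ideal.span {a}, Submodule.fg_span_singleton a⟩

/-- The type of finitely generated `R`-submodules of `M`. -/
def FGSubmodule (R M : Type*) [CommRing R] [AddCommGroup M] [Module R M] : Type _ :=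
  {N : Submodule R M // N.FG}

namespace FGSubmodule

variable {R M : Type*} [CommRing R] [AddCommGroup M] [Module R M]

instance : Zero (FGSubmodule R M) := ⟨⟨⊥, Submodule.fg_bot⟩⟩

instance : Add (FGSubmodule R M) := ⟨fun A B => ⟨A.1 ⊔ B.1, Submodule.FG.sup A.2 B.2⟩⟩

instance : AddCommMonoid (FGSubmodule R M) where
  add_assoc A B C := Subtype.ext (sup_assoc _ _ _)
  zero_add A := Subtype.ext (bot_sup_eq _)
  add_zero A := Subtype.ext (sup_bot_eq _)
  add_comm A B := Subtype.ext (sup_comm _ _)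
  nsmul := nsmulRec

/-- The action of `fgId(R)` on `fgMod(M)`, `(I, N) ↦ I • N`. -/
instance : SMul (FGIdeal R) (FGSubmodule R M) :=
  ⟨fun ρ ν => ⟨ρ.1 • ν.1, by
    rw [Submodule.smul_eq_map₂]; exact Submodule.FG.map₂ _ ρ.2 ν.2⟩⟩

end FGSubmodule

/-- The universal `u_R`-norm `u_M : M → fgMod(M)`, `m ↦ R·m`. -/
def uMfg {R M : Type*} [CommRing R] [AddCommGroup M] [Module R M] (m : M) : FGSubmodule R M :=
  ⟨Submodule.span R {m}, Submodule.fg_span_singleton m⟩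

section SubSemimodules

variable {R M : Type*} [CommRing R] [AddCommGroup M] [Module R M]

/-- A subset of `fgMod(M)` which is an `fgId(R)`-subsemimodule: it contains `0` and is
closed under addition and under the action of `fgId(R)`. -/
def IsSubSemimoduleSet (Λ : Set (FGSubmodule R M)) : Prop :=
  (0 : FGSubmodule R M) ∈ Λ ∧
    (∀ a ∈ Λ, ∀ b ∈ Λ, a + b ∈ Λ) ∧
    ∀ (ρ : FGIdeal R), ∀ a ∈ Λ, ρ • a ∈ Λ

/-- A subset `Λ` of an additive structure is subtractive if `a + b ∈ Λ` and `a ∈ Λ`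
imply `b ∈ Λ`. -/
def IsSubtractiveSet {α : Type*} [Add α] (Λ : Set α) : Prop :=
  ∀ a b : α, a + b ∈ Λ → a ∈ Λ → b ∈ Λ

/-- The smallest subtractive `fgId(R)`-subsemimodule of `fgMod(M)` containing a given
subset (the subtractive closure of the subsemimodule it generates). -/
def kClosureSM (X : Set (FGSubmodule R M)) : Set (FGSubmodule R M) :=
  ⋂₀ {Λ : Set (FGSubmodule R M) | (IsSubSemimoduleSet Λ ∧ IsSubtractiveSet Λ) ∧ X ⊆ Λ}

/-- The map `Mod(M) → Mod_k(fgMod(M))`, `L ↦ ⟨u_M(L)⟩_k`. -/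
def uMtilde (L : Submodule R M) : Set (FGSubmodule R M) :=
  kClosureSM (uMfg '' (L : Set M))

end SubSemimodules

/-! Both maps factor through the lower sets `{ν | ν ≤ L}` of `fgMod(M)`. A subtractive
subsemimodule `Λ` is closed downwards, since `ν ≤ μ` gives `μ + ν = μ`; and it contains every
finitely generated `ν` whose cyclic submodules `R·m` lie in `Λ`, since `ν` is a finite sum of
them. Hence `Λ = {ν | ν ≤ u_M⁻¹(Λ)}`, and `⟨u_M(L)⟩_k = {ν | ν ≤ L}` for every submodule `L`. -/

open FGSubmodule

section Correspondence

variable {R M : Type*} [CommRing R] [AddCommGroup M] [Module R M]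

namespace FGSubmodule

def Iic (L : Submodule R M) : Set (FGSubmodule R M) := {ν | ν.1 ≤ L}

@[simp]
lemma mem_Iic {L : Submodule R M} {ν : FGSubmodule R M} : ν ∈ Iic L ↔ ν.1 ≤ L := Iff.rfl

lemma isSubSemimoduleSet_Iic (L : Submodule R M) : IsSubSemimoduleSet (Iic L) :=
  ⟨mem_Iic.mpr bot_le, fun _ ha _ hb => mem_Iic.mpr (sup_le ha hb),
    fun _ _ ha => mem_Iic.mpr (Submodule.smul_le_right.trans ha)⟩

lemma isSubtractiveSet_Iic (L : Submodule R M) : IsSubtractiveSet (Iic L) :=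
  fun _ _ hab _ => mem_Iic.mpr (le_sup_right.trans hab)

end FGSubmodule

lemma uMfg_val_le_iff (m : M) (N : Submodule R M) : (uMfg m).1 ≤ N ↔ m ∈ N :=
  Submodule.span_singleton_le_iff_mem m N

lemma uMfg_zero : uMfg (0 : M) = (0 : FGSubmodule R M) :=
  Subtype.ext (Submodule.span_zero_singleton R)

lemma uMfg_add_le (a b : M) : (uMfg (a + b)).1 ≤ (uMfg a + uMfg b : FGSubmodule R M).1 :=
  (uMfg_val_le_iff _ _).mpr <| add_mem
    (Submodule.mem_sup_left (Submodule.mem_span_singleton_self a))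
    (Submodule.mem_sup_right (Submodule.mem_span_singleton_self b))

lemma uMfg_smul_le (r : R) (m : M) : (uMfg (r • m) : FGSubmodule R M).1 ≤ (uMfg m).1 :=
  Submodule.span_singleton_smul_le R r m

lemma preimage_uMfg_Iic (L : Submodule R M) : uMfg ⁻¹' Iic L = (L : Set M) :=
  Set.ext fun m => uMfg_val_le_iff m L

section Subtractive

variable {Λ : Set (FGSubmodule R M)}

lemma IsSubtractiveSet.mem_of_val_le (hΛ : IsSubtractiveSet Λ) {a b : FGSubmodule R M}
    (hba : b.1 ≤ a.1) (ha : a ∈ Λ) : b ∈ Λ :=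
  hΛ a b (by rwa [show a + b = a from Subtype.ext (sup_eq_left.mpr hba)]) ha

lemma IsSubSemimoduleSet.mem_of_forall_uMfg_mem (hΛ : IsSubSemimoduleSet Λ)
    (ν : FGSubmodule R M) (hν : ∀ m ∈ ν.1, uMfg m ∈ Λ) : ν ∈ Λ := by
  obtain ⟨N, hN⟩ := ν
  induction N, hN using Submodule.fg_induction with
  | singleton x => exact hν x (Submodule.mem_span_singleton_self x)
  | sup N₁ N₂ hN₁ hN₂ ih₁ ih₂ =>
    exact hΛ.2.1 ⟨N₁, hN₁⟩ (ih₁ fun m hm => hν m (Submodule.mem_sup_left hm))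
      ⟨N₂, hN₂⟩ (ih₂ fun m hm => hν m (Submodule.mem_sup_right hm))

def preimageUMfgSubmodule (h₁ : IsSubSemimoduleSet Λ) (h₂ : IsSubtractiveSet Λ) :
    Submodule R M where
  carrier := uMfg ⁻¹' Λ
  zero_mem' := by simpa only [Set.mem_preimage, uMfg_zero] using h₁.1
  add_mem' {a b} ha hb := h₂.mem_of_val_le (uMfg_add_le a b) (h₁.2.1 _ ha _ hb)
  smul_mem' r m hm := h₂.mem_of_val_le (uMfg_smul_le r m) hm

lemma eq_Iic_preimageUMfgSubmodule (h₁ : IsSubSemimoduleSet Λ) (h₂ : IsSubtractiveSet Λ) :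
    Λ = Iic (preimageUMfgSubmodule h₁ h₂) :=
  Set.ext fun ν =>
    ⟨fun hν m hm => h₂.mem_of_val_le ((uMfg_val_le_iff m ν.1).mpr hm) hν,
      fun hν => h₁.mem_of_forall_uMfg_mem ν fun _ hm => hν hm⟩

end Subtractive

lemma uMtilde_eq_Iic (L : Submodule R M) : uMtilde L = Iic L := by
  refine subset_antisymm (Set.sInter_subset_of_mem ?_) fun ν hν Λ hΛ => ?_
  · exact ⟨⟨isSubSemimoduleSet_Iic L, isSubtractiveSet_Iic L⟩,
      Set.image_subset_iff.mpr (preimage_uMfg_Iic L).superset⟩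
  · exact hΛ.1.1.mem_of_forall_uMfg_mem ν fun m hm => hΛ.2 ⟨m, hν hm, rfl⟩

end Correspondence

/-- `L ↦ ⟨u_M(L)⟩_k` and `Λ ↦ u_M⁻¹(Λ)` are mutually inverse,
inclusion-preserving bijections between the `R`-submodules of `M` and the subtractive
`fgId(R)`-subsemimodules of `fgMod(M)`. -/
theorem correspondence_submodules_subtractive_subsemimodules
    (R M : Type*) [CommRing R] [AddCommGroup M] [Module R M] :
    (∀ L : Submodule R M, IsSubSemimoduleSet (uMtilde L) ∧ IsSubtractiveSet (uMtilde L)) ∧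
    (∀ L : Submodule R M, uMfg ⁻¹' (uMtilde L) = (L : Set M)) ∧
    (∀ Λ : Set (FGSubmodule R M), IsSubSemimoduleSet Λ → IsSubtractiveSet Λ →
      ∃ L : Submodule R M, (L : Set M) = uMfg ⁻¹' Λ ∧ uMtilde L = Λ) ∧
    (∀ L L' : Submodule R M, L ≤ L' → uMtilde L ⊆ uMtilde L') ∧
    (∀ Λ Λ' : Set (FGSubmodule R M), Λ ⊆ Λ' →
      (uMfg ⁻¹' Λ : Set M) ⊆ uMfg ⁻¹' Λ') := by
  refine ⟨fun L => ?_, fun L => ?_, fun Λ h₁ h₂ => ?_, fun L L' hLL' => ?_,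
    fun _ _ h => Set.preimage_mono h⟩
  · rw [uMtilde_eq_Iic]
    exact ⟨isSubSemimoduleSet_Iic L, isSubtractiveSet_Iic L⟩
  · rw [uMtilde_eq_Iic, preimage_uMfg_Iic]
  · refine ⟨preimageUMfgSubmodule h₁ h₂, rfl, ?_⟩
    rw [uMtilde_eq_Iic, ← eq_Iic_preimageUMfgSubmodule]
  · rw [uMtilde_eq_Iic, uMtilde_eq_Iic]
    exact fun _ hν => hν.trans hLL'
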